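/- arXiv:2307.10736 — 2 statements merged into one kernel-verified Lean document; each statement's English description precedes it below -/
import Mathlib

section
/- Fix d ≥ 1, a nonzero vector μ ∈ ℝ^d, σ > 0, and p ∈ (1/2, 1). Let f(·; m, σ²I) denote the N(m, σ²I) density and let X be distributed as N(−μ, σ²I). Then Pr[f(X; μ, σ²I) ≥ p·f(X; −μ, σ²I) and f(X; μ, σ²I) ≥ (1−p)·f(X; 3μ, σ²I)] ≤ Φ(−‖μ‖/σ − σ·ln p/(2‖μ‖)). -/
/-!
The event is contained in `{x | p f(x; −μ) ≤ f(x; μ)}`, and comparing the exponents shows that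
this is the half-space `⟪μ, x⟫ ≥ σ² ln p / 2`. Under `N(−μ, σ²I)` we have `X = −μ + σ Z` with `Z`
standard Gaussian, whose one-dimensional marginal `⟪μ, Z⟫` is `N(0, ‖μ‖²)`. Hence
`⟪μ, X⟫ ∼ N(−‖μ‖², σ²‖μ‖²)`, and the half-space has probability
`Φ((−‖μ‖² − σ² ln p / 2) / (σ‖μ‖))`.
-/

open MeasureTheory Real Set ProbabilityTheory
open scoped ENNReal RealInnerProductSpace

/-- The standard normal cumulative distribution function
`Φ(z) = ∫_{−∞}^z (1/√(2π)) e^{−u²/2} du`. -/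
noncomputable def stdNormCDF (z : ℝ) : ℝ :=
  ∫ u in Set.Iic z, (1 / Real.sqrt (2 * Real.pi)) * Real.exp (-u ^ 2 / 2)
/-- Density of the `d`-dimensional Gaussian `N(m, σ²I)`:
`f(x; m, σ²I) = (2πσ²)^{−d/2} exp(−‖x−m‖²/(2σ²))`. -/
noncomputable def gaussPdf (d : ℕ) (m : EuclideanSpace ℝ (Fin d)) (σ : ℝ)
    (x : EuclideanSpace ℝ (Fin d)) : ℝ :=
  (2 * Real.pi * σ ^ 2) ^ (-(d : ℝ) / 2) * Real.exp (-‖x - m‖ ^ 2 / (2 * σ ^ 2))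

/-- The `d`-dimensional Gaussian measure `N(m, σ²I)` on `ℝ^d`. -/
noncomputable def gauss (d : ℕ) (m : EuclideanSpace ℝ (Fin d)) (σ : ℝ) :
    Measure (EuclideanSpace ℝ (Fin d)) :=
  volume.withDensity fun x => ENNReal.ofReal (gaussPdf d m σ x)

open scoped NNReal

lemma gaussianReal_map_const_add_mul {μ : ℝ} {v : ℝ≥0} (a s : ℝ) :
    (gaussianReal μ v).map (fun t => a + s * t) =
      gaussianReal (a + s * μ) ((s ^ 2).toNNReal * v) := by
  have h : (fun t => a + s * t) = (fun t => a + t) ∘ (fun t => s * t) := rfl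
  rw [h, ← Measure.map_map (by fun_prop) (by fun_prop), gaussianReal_map_const_mul,
    gaussianReal_map_const_add, add_comm, Real.toNNReal_of_nonneg (sq_nonneg s)]

lemma gaussianReal_zero_one_Iic (z : ℝ) :
    gaussianReal 0 1 (Iic z) = ENNReal.ofReal (stdNormCDF z) := by
  rw [gaussianReal_apply_eq_integral _ one_ne_zero, stdNormCDF]
  congr with u
  simp [gaussianPDFReal]

lemma gaussianReal_Ici {m s : ℝ} (hs : 0 < s) (c : ℝ) :
    gaussianReal m (s ^ 2).toNNReal (Ici c) = ENNReal.ofReal (stdNormCDF ((m - c) / s)) := by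
  have h := gaussianReal_map_const_add_mul (μ := 0) (v := 1) m (-s)
  rw [mul_zero, add_zero, neg_sq, mul_one] at h
  rw [← h, Measure.map_apply (by fun_prop) measurableSet_Ici, ← gaussianReal_zero_one_Iic]
  congr 1
  ext t
  simp only [mem_preimage, mem_Ici, mem_Iic, le_div_iff₀ hs]
  constructor <;> intro <;> linarith

section stdGaussian

variable {E : Type*} [NormedAddCommGroup E] [InnerProductSpace ℝ E] [FiniteDimensional ℝ E]
  [MeasurableSpace E] [BorelSpace E]

lemma stdGaussian_map_inner (u : E) :
    (stdGaussian E).map (fun z => ⟪u, z⟫) = gaussianReal 0 (‖u‖ ^ 2).toNNReal := by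
  have h := IsGaussian.map_eq_gaussianReal (μ := stdGaussian E) (innerSL ℝ u)
  rwa [integral_strongDual_stdGaussian, variance_dual_stdGaussian, innerSL_apply_norm] at h

lemma stdGaussian_map_affine_map_inner (m u : E) (σ : ℝ) :
    ((stdGaussian E).map fun z => m + σ • z).map (fun x => ⟪u, x⟫) =
      gaussianReal ⟪u, m⟫ ((σ * ‖u‖) ^ 2).toNNReal := by
  have h : (fun x => ⟪u, x⟫) ∘ (fun z => m + σ • z) =
      (fun t => ⟪u, m⟫ + σ * t) ∘ (fun z => ⟪u, z⟫) := by
    ext z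
    simp only [Function.comp_apply, inner_add_right, inner_smul_right]
  rw [Measure.map_map (by fun_prop) (by fun_prop), h, ← Measure.map_map (by fun_prop) (by fun_prop),
    stdGaussian_map_inner, gaussianReal_map_const_add_mul, mul_zero, add_zero, mul_pow,
    Real.toNNReal_mul (sq_nonneg _)]

end stdGaussian

lemma gaussPdf_toLp (d : ℕ) (m : EuclideanSpace ℝ (Fin d)) (σ : ℝ) (x : Fin d → ℝ) :
    gaussPdf d m σ (WithLp.toLp 2 x) = ∏ i, gaussianPDFReal (m i) (σ ^ 2).toNNReal (x i) := by
  have hσ2 : ((σ ^ 2).toNNReal : ℝ) = σ ^ 2 := Real.coe_toNNReal _ (sq_nonneg σ)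
  have hconst : (2 * π * σ ^ 2) ^ (-(d : ℝ) / 2) = (√(2 * π * σ ^ 2))⁻¹ ^ d := by
    rw [Real.sqrt_eq_rpow, ← Real.rpow_neg (by positivity), ← Real.rpow_mul_natCast (by positivity)]
    ring_nf
  have hnorm : ‖WithLp.toLp 2 x - m‖ ^ 2 = ∑ i, (x i - m i) ^ 2 := by
    simp [EuclideanSpace.real_norm_sq_eq]
  simp only [gaussianPDFReal, Finset.prod_mul_distrib, Finset.prod_const, Finset.card_univ,
    Fintype.card_fin, ← Real.exp_sum, hσ2]
  rw [gaussPdf, hconst, hnorm, ← Finset.sum_neg_distrib, Finset.sum_div]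

lemma gauss_map_ofLp (d : ℕ) (m : EuclideanSpace ℝ (Fin d)) {σ : ℝ} (hσ : σ ≠ 0) :
    (gauss d m σ).map (WithLp.ofLp (p := 2)) =
      Measure.pi fun i => gaussianReal (m i) (σ ^ 2).toNNReal := by
  have hv : (σ ^ 2).toNNReal ≠ 0 := by simpa using hσ
  refine (Measure.pi_eq fun s hs => ?_).symm
  have hbox : MeasurableSet (univ.pi s) := .univ_pi hs
  rw [Measure.map_apply (by fun_prop) hbox, gauss,
    withDensity_apply _ (hbox.preimage (by fun_prop)),
    ← (PiLp.volume_preserving_toLp (Fin d)).setLIntegral_comp_preimage_emb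
      (MeasurableEquiv.toLp 2 (Fin d → ℝ)).measurableEmbedding]
  change ∫⁻ x in univ.pi s, _ = _
  simp_rw [gaussPdf_toLp, volume_pi, Measure.restrict_pi_pi]
  rw [← ofReal_integral_eq_lintegral_ofReal
      (Integrable.fintype_prod fun i => (integrable_gaussianPDFReal _ _).restrict)
      (ae_of_all _ fun x => Finset.prod_nonneg fun i _ => gaussianPDFReal_nonneg _ _ _),
    integral_fintype_prod_eq_prod,
    ENNReal.ofReal_prod_of_nonneg fun i _ => setIntegral_nonneg (hs i)
      fun x _ => gaussianPDFReal_nonneg _ _ _]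
  exact Finset.prod_congr rfl fun i _ => (gaussianReal_apply_eq_integral _ hv _).symm

lemma gauss_eq_map_stdGaussian (d : ℕ) (m : EuclideanSpace ℝ (Fin d)) {σ : ℝ} (hσ : σ ≠ 0) :
    gauss d m σ = (stdGaussian _).map fun z => m + σ • z := by
  have hcoord : ∀ i, (gaussianReal 0 1).map (fun t => m i + σ * t) =
      gaussianReal (m i) (σ ^ 2).toNNReal := fun i => by
    rw [gaussianReal_map_const_add_mul, mul_zero, add_zero, mul_one]
  calc gauss d m σ = ((gauss d m σ).map (WithLp.ofLp (p := 2))).map (WithLp.toLp 2) := by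
        rw [Measure.map_map (by fun_prop) (by fun_prop)]
        exact Measure.map_id.symm
    _ = ((Measure.pi fun _ => gaussianReal 0 1).map fun x i => m i + σ * x i).map
          (WithLp.toLp 2) := by
        rw [gauss_map_ofLp d m hσ, Measure.pi_map_pi (f := fun i t => m i + σ * t)
          (fun _ => by fun_prop)]
        simp_rw [hcoord]
    _ = (stdGaussian _).map fun z => m + σ • z := by
        rw [← map_pi_eq_stdGaussian, Measure.map_map (by fun_prop) (by fun_prop),
          Measure.map_map (by fun_prop) (by fun_prop)]
        rfl

lemma gauss_setOf_le_inner (d : ℕ) (m : EuclideanSpace ℝ (Fin d)) {σ : ℝ} (hσ : 0 < σ)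
    {u : EuclideanSpace ℝ (Fin d)} (hu : u ≠ 0) (c : ℝ) :
    gauss d m σ {x | c ≤ ⟪u, x⟫} = ENNReal.ofReal (stdNormCDF ((⟪u, m⟫ - c) / (σ * ‖u‖))) := by
  rw [gauss_eq_map_stdGaussian d m hσ.ne', ← gaussianReal_Ici (mul_pos hσ (norm_pos_iff.2 hu)),
    ← stdGaussian_map_affine_map_inner, Measure.map_apply (by fun_prop) measurableSet_Ici]
  rfl

lemma mul_gaussPdf_neg_le_gaussPdf_iff (d : ℕ) (μ x : EuclideanSpace ℝ (Fin d)) {σ p : ℝ}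
    (hσ : σ ≠ 0) (hp : 0 < p) :
    p * gaussPdf d (-μ) σ x ≤ gaussPdf d μ σ x ↔ σ ^ 2 * log p / 2 ≤ ⟪μ, x⟫ := by
  have hC : 0 < (2 * π * σ ^ 2) ^ (-(d : ℝ) / 2) := by positivity
  have hgap : -(‖x‖ ^ 2 - 2 * ⟪μ, x⟫ + ‖μ‖ ^ 2) / (2 * σ ^ 2) -
      (log p + -(‖x‖ ^ 2 + 2 * ⟪μ, x⟫ + ‖μ‖ ^ 2) / (2 * σ ^ 2)) =
      2 / σ ^ 2 * (⟪μ, x⟫ - σ ^ 2 * log p / 2) := by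
    field_simp
    ring
  rw [gaussPdf, gaussPdf, mul_left_comm, mul_le_mul_iff_right₀ hC, ← Real.exp_log hp,
    ← Real.exp_add, Real.exp_le_exp, sub_neg_eq_add, norm_add_sq_real, norm_sub_sq_real,
    real_inner_comm, Real.exp_log hp, ← sub_nonneg, hgap,
    mul_nonneg_iff_of_pos_left (by positivity), sub_nonneg]

theorem mda_err_neg_major_general (d : ℕ) (μv : EuclideanSpace ℝ (Fin d)) (hμ : μv ≠ 0)
    (σ p : ℝ) (hσ : 0 < σ) (hp1 : 1 / 2 < p) :
    ((gauss d (-μv) σ) {x | p * gaussPdf d (-μv) σ x ≤ gaussPdf d μv σ x ∧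
        (1 - p) * gaussPdf d ((3 : ℝ) • μv) σ x ≤ gaussPdf d μv σ x}).toReal ≤
      stdNormCDF (-‖μv‖ / σ - σ * Real.log p / (2 * ‖μv‖)) := by
  have hp : 0 < p := by linarith
  have hevent : {x | p * gaussPdf d (-μv) σ x ≤ gaussPdf d μv σ x ∧
      (1 - p) * gaussPdf d ((3 : ℝ) • μv) σ x ≤ gaussPdf d μv σ x} ⊆
      {x | σ ^ 2 * log p / 2 ≤ ⟪μv, x⟫} := fun x hx =>
    (mul_gaussPdf_neg_le_gaussPdf_iff d μv x hσ.ne' hp).1 hx.1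
  have hbound : (⟪μv, -μv⟫ - σ ^ 2 * log p / 2) / (σ * ‖μv‖) =
      -‖μv‖ / σ - σ * log p / (2 * ‖μv‖) := by
    have := norm_pos_iff.2 hμ
    rw [inner_neg_right, real_inner_self_eq_norm_sq]
    field_simp
  refine ENNReal.toReal_le_of_le_ofReal ?_ ?_
  · exact setIntegral_nonneg measurableSet_Iic fun u _ => by positivity
  calc gauss d (-μv) σ _ ≤ gauss d (-μv) σ {x | σ ^ 2 * log p / 2 ≤ ⟪μv, x⟫} := measure_mono hevent
    _ = _ := by rw [gauss_setOf_le_inner d _ hσ hμ, hbound]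

/-- For `X ∼ N(−μ, σ²I)`, the probability that the MDA classifier assigns label
`+1` to `X` is at most `Φ(−‖μ‖/σ − σ ln p/(2‖μ‖))`. -/
theorem mda_err_neg_major (d : ℕ) (hd : 1 ≤ d) (μv : EuclideanSpace ℝ (Fin d)) (hμ : μv ≠ 0)
    (σ p : ℝ) (hσ : 0 < σ) (hp1 : 1 / 2 < p) (hp2 : p < 1) :
    ((gauss d (-μv) σ) {x | p * gaussPdf d (-μv) σ x ≤ gaussPdf d μv σ x ∧
        (1 - p) * gaussPdf d ((3 : ℝ) • μv) σ x ≤ gaussPdf d μv σ x}).toReal ≤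
      stdNormCDF (-‖μv‖ / σ - σ * Real.log p / (2 * ‖μv‖)) :=
  mda_err_neg_major_general d μv hμ σ p hσ hp1
end

section
/- Fix d ≥ 1, a nonzero vector μ ∈ ℝ^d, σ > 0, and p ∈ (1/2, 1). Let f(·; m, σ²I) denote the N(m, σ²I) density and let X be distributed as N(3μ, σ²I). Then Pr[f(X; μ, σ²I) ≥ p·f(X; −μ, σ²I) and f(X; μ, σ²I) ≥ (1−p)·f(X; 3μ, σ²I)] ≤ Φ(−‖μ‖/σ − σ·ln(1−p)/‖μ‖). -/
open MeasureTheory Real Set ProbabilityTheory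
open scoped ENNReal RealInnerProductSpace

/-! Only the second constraint is needed. Comparing the densities of `N(μ, σ²I)` and
`N(3μ, σ²I)` turns it into the half-space `⟪μ, x⟫ ≤ 2‖μ‖² - σ² log(1-p) / 2`, which lies in
`{⟪μ, x⟫ ≤ t}` for `t = 2‖μ‖² - σ² log(1-p)` since `log(1-p) < 0`. Under `X ∼ N(3μ, σ²I)` the
projection `⟪μ, X⟫` is `N(3‖μ‖², σ²‖μ‖²)`, as the characteristic function shows, so this
half-space has probability `Φ((t - 3‖μ‖²) / (σ‖μ‖))`, which is the bound. -/

section Gauss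

variable {d : ℕ} {σ : ℝ}

lemma gaussPdf_nonneg (m x : EuclideanSpace ℝ (Fin d)) : 0 ≤ gaussPdf d m σ x := by
  unfold gaussPdf
  positivity

lemma measurable_gaussPdf (m : EuclideanSpace ℝ (Fin d)) : Measurable (gaussPdf d m σ) := by
  unfold gaussPdf
  fun_prop

lemma mul_gaussPdf_le_gaussPdf_iff {c : ℝ} (hσ : σ ≠ 0) (hc : 0 < c)
    (m₁ m₂ x : EuclideanSpace ℝ (Fin d)) :
    c * gaussPdf d m₁ σ x ≤ gaussPdf d m₂ σ x ↔
      ‖x - m₂‖ ^ 2 + 2 * σ ^ 2 * log c ≤ ‖x - m₁‖ ^ 2 := by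
  have hC : 0 < (2 * π * σ ^ 2) ^ (-(d : ℝ) / 2) := by positivity
  have hσ2 : 0 < 2 * σ ^ 2 := by positivity
  unfold gaussPdf
  rw [mul_left_comm, mul_le_mul_iff_right₀ hC, ← exp_log hc, ← exp_add, exp_le_exp, log_exp,
    ← mul_le_mul_iff_of_pos_right hσ2, add_mul, neg_div, neg_div, neg_mul, neg_mul,
    div_mul_cancel₀ _ hσ2.ne', div_mul_cancel₀ _ hσ2.ne']
  constructor <;> intro h <;> linarith

open Complex in
lemma charFun_gauss (hσ : σ ≠ 0) (m t : EuclideanSpace ℝ (Fin d)) :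
    charFun (gauss d m σ) t = cexp (⟪m, t⟫ * I - σ ^ 2 * ‖t‖ ^ 2 / 2) := by
  set A : ℝ := 2 * π * σ ^ 2 with hA_def
  set b : ℂ := (((2 * σ ^ 2)⁻¹ : ℝ) : ℂ) with hb_def
  have hA : 0 < A := by positivity
  have hb : 0 < b.re := by rw [hb_def, ofReal_re]; positivity
  have hshift (y : EuclideanSpace ℝ (Fin d)) :
      ((gaussPdf d m σ (y + m) : ℝ) : ℂ) * cexp (⟪y + m, t⟫ * I)
        = ((A ^ (-(d : ℝ) / 2) : ℝ) : ℂ) * cexp (⟪m, t⟫ * I)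
          * cexp (-b * ‖y‖ ^ 2 + I * ⟪t, y⟫) := by
    simp only [gaussPdf, add_sub_cancel_right, inner_add_left, real_inner_comm t y]
    push_cast
    simp only [mul_assoc, ← Complex.exp_add]
    congr 2
    · rw [hA_def, mul_assoc]
    · rw [hb_def]; push_cast; field_simp; ring
  have hnormalize : ((A ^ (-(d : ℝ) / 2) : ℝ) : ℂ) * (π / b) ^ ((d : ℂ) / 2) = 1 := by
    rw [show (π / b : ℂ) = (A : ℂ) by rw [hb_def, hA_def]; push_cast; field_simp,
      ofReal_cpow hA.le, ← cpow_add _ _ (by exact_mod_cast hA.ne')]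
    push_cast
    ring_nf
    exact cpow_zero _
  rw [charFun_apply, gauss, integral_withDensity_eq_integral_toReal_smul
      (measurable_gaussPdf m).ennreal_ofReal (ae_of_all _ fun _ => ENNReal.ofReal_lt_top),
    ← integral_add_right_eq_self _ m]
  simp only [ENNReal.toReal_ofReal (gaussPdf_nonneg _ _), real_smul, hshift]
  rw [integral_const_mul, GaussianFourier.integral_cexp_neg_mul_sq_norm_add hb,
    finrank_euclideanSpace_fin, mul_mul_mul_comm, hnormalize, one_mul, ← Complex.exp_add,
    hb_def, I_sq]
  congr 1
  push_cast
  field_simp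
  ring

/-- `charFun_gauss` needs no integrability of the density, so at `t = 0` it computes the total
mass. -/
lemma isProbabilityMeasure_gauss (hσ : σ ≠ 0) (m : EuclideanSpace ℝ (Fin d)) :
    IsProbabilityMeasure (gauss d m σ) := by
  have h := charFun_gauss hσ m 0
  simp only [charFun_zero, inner_zero_right, norm_zero] at h
  norm_num at h
  exact ⟨(ENNReal.toReal_eq_one_iff _).mp h⟩

open Complex in
lemma gauss_map_inner (hσ : σ ≠ 0) (m v : EuclideanSpace ℝ (Fin d)) :
    (gauss d m σ).map (⟪v, ·⟫) = gaussianReal ⟪v, m⟫ (.mk ((σ * ‖v‖) ^ 2) (sq_nonneg _)) := by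
  have := isProbabilityMeasure_gauss hσ m
  have := Measure.isProbabilityMeasure_map (μ := gauss d m σ) (f := (⟪v, ·⟫)) (by fun_prop)
  refine Measure.ext_of_charFun (funext fun s => ?_)
  have hcharFun : charFun ((gauss d m σ).map (⟪v, ·⟫)) s = charFun (gauss d m σ) (s • v) := by
    rw [charFun_apply, charFun_apply, integral_map (by fun_prop) (by fun_prop)]
    simp [real_inner_smul_right, real_inner_comm, mul_comm]
  have hnorm : ‖s • v‖ ^ 2 = s ^ 2 * ‖v‖ ^ 2 := by
    rw [norm_smul, mul_pow, Real.norm_eq_abs, sq_abs]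
  rw [hcharFun, charFun_gauss hσ, charFun_gaussianReal]
  congr 1
  rw [← ofReal_pow ‖s • v‖, hnorm, real_inner_smul_right, real_inner_comm, NNReal.coe_mk]
  push_cast
  ring

end Gauss

lemma gaussianReal_real_Iic {s : ℝ} (hs : 0 < s) (a t : ℝ) :
    (gaussianReal a (.mk (s ^ 2) (sq_nonneg _))).real (Iic t) = stdNormCDF ((t - a) / s) := by
  have hmap : (gaussianReal 0 1).map (fun z => a + s * z)
      = gaussianReal a (.mk (s ^ 2) (sq_nonneg _)) := by
    rw [show (fun z => a + s * z) = (a + ·) ∘ (s * ·) from rfl,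
      ← Measure.map_map (measurable_const_add a) (measurable_const_mul s),
      gaussianReal_map_const_mul, gaussianReal_map_const_add]
    simp
  have hpre : (fun z => a + s * z) ⁻¹' Iic t = Iic ((t - a) / s) := by
    ext z
    simp only [mem_preimage, mem_Iic, le_div_iff₀ hs]
    constructor <;> intro h <;> linarith
  rw [← hmap, map_measureReal_apply (by fun_prop) measurableSet_Iic, hpre, measureReal_def,
    gaussianReal_apply_eq_integral 0 one_ne_zero,
    ENNReal.toReal_ofReal (integral_nonneg fun _ => gaussianPDFReal_nonneg _ _ _)]
  simp [gaussianPDFReal, stdNormCDF]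

theorem mda_err_neg_minor_general (d : ℕ) (μv : EuclideanSpace ℝ (Fin d)) (hμ : μv ≠ 0)
    (σ p : ℝ) (hσ : 0 < σ) (hp1 : 1 / 2 < p) (hp2 : p < 1) :
    ((gauss d ((3 : ℝ) • μv) σ) {x | p * gaussPdf d (-μv) σ x ≤ gaussPdf d μv σ x ∧
        (1 - p) * gaussPdf d ((3 : ℝ) • μv) σ x ≤ gaussPdf d μv σ x}).toReal ≤
      stdNormCDF (-‖μv‖ / σ - σ * Real.log (1 - p) / ‖μv‖) := by
  have hμpos : 0 < ‖μv‖ := norm_pos_iff.mpr hμ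
  have hlog : σ ^ 2 * log (1 - p) ≤ 0 :=
    mul_nonpos_of_nonneg_of_nonpos (sq_nonneg σ) (log_nonpos (by linarith) (by linarith))
  set t := 2 * ‖μv‖ ^ 2 - σ ^ 2 * log (1 - p)
  have hsub : {x | p * gaussPdf d (-μv) σ x ≤ gaussPdf d μv σ x ∧
        (1 - p) * gaussPdf d ((3 : ℝ) • μv) σ x ≤ gaussPdf d μv σ x} ⊆ (⟪μv, ·⟫) ⁻¹' Iic t := by
    rintro x ⟨-, hx⟩
    rw [mul_gaussPdf_le_gaussPdf_iff hσ.ne' (by linarith)] at hx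
    have hexpand : ‖x - μv‖ ^ 2 - ‖x - (3 : ℝ) • μv‖ ^ 2 = 4 * ⟪μv, x⟫ - 8 * ‖μv‖ ^ 2 := by
      rw [norm_sub_sq_real, norm_sub_sq_real, inner_smul_right, norm_smul, real_inner_comm]
      norm_num
      ring
    simp only [mem_preimage, mem_Iic]
    linarith
  have := isProbabilityMeasure_gauss hσ.ne' ((3 : ℝ) • μv)
  calc (gauss d ((3 : ℝ) • μv) σ).real _
      ≤ (gauss d ((3 : ℝ) • μv) σ).real ((⟪μv, ·⟫) ⁻¹' Iic t) := measureReal_mono hsub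
    _ = (gaussianReal (3 * ‖μv‖ ^ 2) (.mk ((σ * ‖μv‖) ^ 2) (sq_nonneg _))).real (Iic t) := by
      rw [← map_measureReal_apply (by fun_prop) measurableSet_Iic, gauss_map_inner hσ.ne',
        inner_smul_right, real_inner_self_eq_norm_sq]
    _ = stdNormCDF (-‖μv‖ / σ - σ * Real.log (1 - p) / ‖μv‖) := by
      rw [gaussianReal_real_Iic (by positivity)]
      congr 1
      field_simp
      ring

/-- For `X ∼ N(3μ, σ²I)`, the probability that the MDA classifier assigns label
`+1` to `X` is at most `Φ(−‖μ‖/σ − σ ln(1−p)/‖μ‖)`. -/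
theorem mda_err_neg_minor (d : ℕ) (hd : 1 ≤ d) (μv : EuclideanSpace ℝ (Fin d)) (hμ : μv ≠ 0)
    (σ p : ℝ) (hσ : 0 < σ) (hp1 : 1 / 2 < p) (hp2 : p < 1) :
    ((gauss d ((3 : ℝ) • μv) σ) {x | p * gaussPdf d (-μv) σ x ≤ gaussPdf d μv σ x ∧
        (1 - p) * gaussPdf d ((3 : ℝ) • μv) σ x ≤ gaussPdf d μv σ x}).toReal ≤
      stdNormCDF (-‖μv‖ / σ - σ * Real.log (1 - p) / ‖μv‖) :=
  mda_err_neg_minor_general d μv hμ σ p hσ hp1 hp2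
end
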